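/- arXiv:0802.2076 — 5 statements merged into one kernel-verified Lean document; each statement's English description precedes it below -/
import Mathlib

section
/- Let A be a unital C*-algebra, α an automorphism of A, and E : A → A a bounded linear projection onto the fixed-point subalgebra of α. Suppose that for every a ∈ A with E(a) = 0 and every strictly increasing sequence (n_k) of natural numbers, lim_{n→∞} (1/n) ‖Σ_{k=1}^{n} α^{n_k}(a)‖ = 0. Then for every bounded linear functional φ on A and every a ∈ A, lim_{n→∞} φ(αⁿ(a)) = φ(E(a)). -/
open Filter Finset Topology

/-!
Write `a = (a - E a) + E a`. The second summand is fixed by `α`, and `b = a - E a` satisfies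
`E b = 0`. The scalar sequence `φ (αⁿ b)` is bounded, since `*`-automorphisms of a C*-algebra
are contractive, so every subsequence has a further convergent subsequence. Along it the
Cesàro means converge to the same limit, but they are also bounded by
`‖φ‖ · (1/n) ‖∑ α^{n_k} b‖ → 0`; hence every subsequential limit is `0`.
-/

theorem tendsto_zero_of_forall_strictMono_cesaro {E : Type*} [NormedAddCommGroup E]
    [NormedSpace ℝ E] [ProperSpace E] {u : ℕ → E} (hu : Bornology.IsBounded (Set.range u))
    (hces : ∀ nk : ℕ → ℕ, StrictMono nk →
      Tendsto (fun n : ℕ => (n⁻¹ : ℝ) • ∑ i ∈ range n, u (nk i)) atTop (𝓝 0)) :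
    Tendsto u atTop (𝓝 0) := by
  refine tendsto_of_subseq_tendsto fun ns hns => ?_
  obtain ⟨g, hg⟩ := strictMono_subseq_of_tendsto_atTop hns
  obtain ⟨c, -, h, hh, hlim⟩ :=
    tendsto_subseq_of_bounded hu fun n => Set.mem_range_self ((ns ∘ g) n)
  have hc : c = 0 := tendsto_nhds_unique hlim.cesaro_smul (hces _ (hg.2.comp hh))
  exact ⟨g ∘ h, by simpa [hc, Function.comp_def] using hlim⟩

theorem ContinuousLinearMap.tendsto_inv_smul_sum_map {𝕜 E F : Type*}
    [NontriviallyNormedField 𝕜] [SeminormedAddCommGroup E] [NormedSpace 𝕜 E]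
    [SeminormedAddCommGroup F] [NormedSpace 𝕜 F] [NormedSpace ℝ F] (φ : E →L[𝕜] F)
    {v : ℕ → E} (hv : Tendsto (fun n : ℕ => (1 / n : ℝ) * ‖∑ i ∈ range n, v i‖) atTop (𝓝 0)) :
    Tendsto (fun n : ℕ => (n⁻¹ : ℝ) • ∑ i ∈ range n, φ (v i)) atTop (𝓝 0) := by
  refine squeeze_zero_norm (fun n => ?_) (by simpa using hv.const_mul ‖φ‖)
  rw [norm_smul, ← map_sum, norm_inv, Real.norm_natCast, mul_left_comm ‖φ‖]
  gcongr
  exact φ.le_opNorm _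

theorem StarAlgEquiv.norm_iterate_apply_le {A : Type*} [CStarAlgebra A] (α : A ≃⋆ₐ[ℂ] A)
    (n : ℕ) (a : A) : ‖(⇑α)^[n] a‖ ≤ ‖a‖ := by
  rw [← StarAlgEquiv.coe_pow]
  exact NonUnitalStarAlgHom.norm_apply_le _ a

theorem stmt2_general {A : Type*} [NormedRing A] [StarRing A] [CStarRing A]
    [NormedAlgebra ℂ A] [StarModule ℂ A] [CompleteSpace A]
    (α : A ≃⋆ₐ[ℂ] A) (E : A →L[ℂ] A)
    (hproj : ∀ a : A, E (E a) = E a)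
    (hfix : ∀ a : A, α (E a) = E a)
    (hces : ∀ a : A, E a = 0 → ∀ nk : ℕ → ℕ, StrictMono nk →
      Tendsto (fun n : ℕ => (1 / n : ℝ) * ‖∑ k ∈ range n, (⇑α)^[nk k] a‖)
        atTop (nhds 0)) :
    ∀ φ : A →L[ℂ] ℂ, ∀ a : A,
      Tendsto (fun n : ℕ => φ ((⇑α)^[n] a)) atTop (nhds (φ (E a))) := by
  let _ : CStarAlgebra A := { }
  intro φ a
  have hsplit (n : ℕ) : (⇑α)^[n] a = (⇑α)^[n] (a - E a) + E a := by
    nth_rewrite 1 [← sub_add_cancel a (E a)]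
    rw [iterate_map_add, Function.iterate_fixed (hfix a)]
  have hbdd : Bornology.IsBounded (Set.range fun n => φ ((⇑α)^[n] (a - E a))) := by
    refine isBounded_iff_forall_norm_le.2 ⟨‖φ‖ * ‖a - E a‖, ?_⟩
    rintro _ ⟨n, rfl⟩
    exact φ.le_opNorm_of_le (α.norm_iterate_apply_le n _)
  have hmix : Tendsto (fun n => φ ((⇑α)^[n] (a - E a))) atTop (𝓝 0) :=
    tendsto_zero_of_forall_strictMono_cesaro hbdd fun nk hnk =>
      φ.tendsto_inv_smul_sum_map (hces _ (by simp [hproj]) nk hnk)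
  simpa only [zero_add, ← map_add, ← hsplit] using hmix.add_const (φ (E a))

/-- Norm convergence to zero of the Cesàro means along every subsequence, for
elements with vanishing conditional expectation, implies E-mixing. -/
theorem stmt2 {A : Type*} [NormedRing A] [StarRing A] [CStarRing A]
    [NormedAlgebra ℂ A] [StarModule ℂ A] [CompleteSpace A]
    (α : A ≃⋆ₐ[ℂ] A) (E : A →L[ℂ] A)
    (hproj : ∀ a : A, E (E a) = E a)
    (hfix : ∀ a : A, α (E a) = E a)
    (honto : ∀ a : A, α a = a → E a = a)
    (hces : ∀ a : A, E a = 0 → ∀ nk : ℕ → ℕ, StrictMono nk →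
      Tendsto (fun n : ℕ => (1 / n : ℝ) * ‖∑ k ∈ range n, (⇑α)^[nk k] a‖)
        atTop (nhds 0)) :
    ∀ φ : A →L[ℂ] ℂ, ∀ a : A,
      Tendsto (fun n : ℕ => φ ((⇑α)^[n] a)) atTop (nhds (φ (E a))) :=
  stmt2_general α E hproj hfix hces
end

section
/- Let X be a compact metric space, T : X → X a homeomorphism, and μ a T-invariant Borel probability measure on X such that for every Borel probability measure ν on X and every continuous function f : X → ℂ, lim_{n→∞} ∫ f∘Tⁿ dν = ∫ f dμ. Then the support of μ is a single point, i.e., there exists x* ∈ X with μ = δ_{x*}. -/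
/-!
Pick any point `x` and a cluster point `x₀` of its orbit, which exists by compactness. Testing
the mixing hypothesis against the state `δ_x` gives `f (Tⁿ x) → ∫ f dμ` for every continuous `f`,
while along the times where `Tⁿ x` approaches `x₀` the values `f (Tⁿ x)` accumulate at `f x₀`.
Hence `∫ f dμ = f x₀` for all continuous `f`, i.e. `μ = δ_{x₀}`.
-/

open Filter MeasureTheory Topology BoundedContinuousFunction

theorem MapClusterPt.eq_of_tendsto_comp {ι X Y : Type*} [TopologicalSpace X] [TopologicalSpace Y]
    [T2Space Y] {F : Filter ι} {u : ι → X} {x₀ : X} {f : X → Y} {L : Y}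
    (hx₀ : MapClusterPt x₀ F u) (hf : ContinuousAt f x₀) (hL : Tendsto (f ∘ u) F (𝓝 L)) :
    f x₀ = L :=
  eq_of_nhds_neBot <| (hx₀.continuousAt_comp hf).clusterPt.mono hL

theorem MeasureTheory.eq_dirac_of_forall_integral_eq {Ω : Type*} [MeasurableSpace Ω]
    [TopologicalSpace Ω] [HasOuterApproxClosed Ω] [BorelSpace Ω] {μ : Measure Ω}
    [IsFiniteMeasure μ] {x₀ : Ω} (h : ∀ f : Ω →ᵇ ℝ, ∫ x, f x ∂μ = f x₀) :
    μ = Measure.dirac x₀ :=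
  ext_of_forall_integral_eq_of_IsFiniteMeasure fun f => by
    rw [h, integral_dirac' _ _ f.continuous.stronglyMeasurable]

theorem stmt6_general {X : Type*} [MetricSpace X] [CompactSpace X]
    [MeasurableSpace X] [BorelSpace X]
    (T : X ≃ₜ X) (μ : Measure X) [IsProbabilityMeasure μ]
    (hmix : ∀ ν : Measure X, IsProbabilityMeasure ν → ∀ f : C(X, ℂ),
      Tendsto (fun n : ℕ => ∫ x, f ((⇑T)^[n] x) ∂ν) atTop (nhds (∫ x, f x ∂μ))) :
    ∃ x₀ : X, μ = Measure.dirac x₀ := by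
  obtain ⟨x⟩ := nonempty_of_isProbabilityMeasure μ
  obtain ⟨x₀, -, hx₀⟩ := isCompact_univ.exists_mapClusterPt (f := atTop)
    (u := fun n => (⇑T)^[n] x) (by simp)
  have integral_eq_apply (g : C(X, ℂ)) : ∫ y, g y ∂μ = g x₀ := by
    have hg := hmix (Measure.dirac x) inferInstance g
    simp only [integral_dirac] at hg
    exact (hx₀.eq_of_tendsto_comp g.continuous.continuousAt hg).symm
  refine ⟨x₀, eq_dirac_of_forall_integral_eq fun f => ?_⟩
  have hf : ∫ y, (f y : ℂ) ∂μ = f x₀ := integral_eq_apply ⟨fun y => (f y : ℂ), by fun_prop⟩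
  exact_mod_cast integral_complex_ofReal.symm.trans hf

/-- If a classical compact metric dynamical system converges to equilibrium
(the quantum unique-mixing property tested on all states of `C(X)`), then the
unique invariant measure is a Dirac measure. -/
theorem stmt6 {X : Type*} [MetricSpace X] [CompactSpace X]
    [MeasurableSpace X] [BorelSpace X]
    (T : X ≃ₜ X) (μ : Measure X) [IsProbabilityMeasure μ]
    (hinv : ∀ s : Set X, MeasurableSet s → μ (⇑T ⁻¹' s) = μ s)
    (hmix : ∀ ν : Measure X, IsProbabilityMeasure ν → ∀ f : C(X, ℂ),
      Tendsto (fun n : ℕ => ∫ x, f ((⇑T)^[n] x) ∂ν) atTop (nhds (∫ x, f x ∂μ))) :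
    ∃ x₀ : X, μ = Measure.dirac x₀ :=
  stmt6_general T μ hmix
end

section
/- Let X be a compact metric space and T : X → X a homeomorphism such that for all x ∈ X and all continuous f : X → ℂ, the sequence f(Tⁿx) converges and its limit ∫f dμ is independent of x, where μ is a T-invariant Borel probability measure with support equal to X. Then X is a singleton. -/
/-!
Along a cluster point `z` of any orbit, the hypothesis forces `f z = ∫ f dμ` for every continuous
`f`. Taking `f = dist · z` gives `∫ dist w z dμ = 0`; a continuous nonnegative function with zero
integral against a fully supported measure vanishes identically, so every point equals `z`.
-/

open Filter MeasureTheory Topology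

theorem MapClusterPt.apply_eq_of_tendsto {α X Y : Type*} [TopologicalSpace X] [TopologicalSpace Y]
    [T2Space Y] {F : Filter α} {u : α → X} {z : X} {f : X → Y} {a : Y}
    (hz : MapClusterPt z F u) (hf : ContinuousAt f z) (hfu : Tendsto (f ∘ u) F (𝓝 a)) :
    f z = a := by
  by_contra hne
  have hcl : ClusterPt (f z) (𝓝 a) := (hz.continuousAt_comp hf).clusterPt.mono hfu
  exact hcl.ne (disjoint_nhds_nhds.2 hne).eq_bot

theorem eq_of_integral_dist_eq_zero {X : Type*} [MetricSpace X] [CompactSpace X]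
    [MeasurableSpace X] [OpensMeasurableSpace X] (μ : Measure X) [IsFiniteMeasure μ]
    [μ.IsOpenPosMeasure] {z : X} (h : ∫ w, dist w z ∂μ = 0) (w : X) : w = z := by
  have hcont : Continuous fun w => dist w z := continuous_id.dist continuous_const
  have hae : (fun w => dist w z) =ᵐ[μ] 0 :=
    (integral_eq_zero_iff_of_nonneg (fun w => dist_nonneg)
      (hcont.integrable_of_hasCompactSupport (.of_compactSpace _))).1 h
  exact dist_eq_zero.1 (congrFun ((hcont.ae_eq_iff_eq μ continuous_const).1 hae) w)

theorem stmt7_general {X : Type*} [MetricSpace X] [CompactSpace X]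
    [MeasurableSpace X] [BorelSpace X]
    (T : X ≃ₜ X) (μ : Measure X) [IsProbabilityMeasure μ]
    (hfull : ∀ U : Set X, IsOpen U → U.Nonempty → 0 < μ U)
    (hmix : ∀ x : X, ∀ f : C(X, ℂ),
      Tendsto (fun n : ℕ => f ((⇑T)^[n] x)) atTop (nhds (∫ y, f y ∂μ))) :
    ∃ x : X, ∀ y : X, y = x := by
  have : μ.IsOpenPosMeasure := ⟨fun U hU hne => (hfull U hU hne).ne'⟩
  obtain ⟨x⟩ := nonempty_of_isProbabilityMeasure μ
  obtain ⟨z, -, hz⟩ := isCompact_univ.exists_mapClusterPt (f := atTop)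
    (u := fun n : ℕ => (⇑T)^[n] x) (by simp)
  let d : C(X, ℂ) := ⟨fun w => (dist w z : ℂ), by fun_prop⟩
  have hd : (dist z z : ℂ) = ∫ w, (dist w z : ℂ) ∂μ :=
    hz.apply_eq_of_tendsto (f := d) d.continuous.continuousAt (hmix x d)
  rw [dist_self, integral_complex_ofReal] at hd
  exact ⟨z, eq_of_integral_dist_eq_zero μ (by exact_mod_cast hd.symm)⟩

/-- If unique mixing holds tested on Dirac point measures with a fully
supported invariant measure, then the space is a singleton. -/
theorem stmt7 {X : Type*} [MetricSpace X] [CompactSpace X]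
    [MeasurableSpace X] [BorelSpace X]
    (T : X ≃ₜ X) (μ : Measure X) [IsProbabilityMeasure μ]
    (hinv : ∀ s : Set X, MeasurableSet s → μ (⇑T ⁻¹' s) = μ s)
    (hfull : ∀ U : Set X, IsOpen U → U.Nonempty → 0 < μ U)
    (hmix : ∀ x : X, ∀ f : C(X, ℂ),
      Tendsto (fun n : ℕ => f ((⇑T)^[n] x)) atTop (nhds (∫ y, f y ∂μ))) :
    ∃ x : X, ∀ y : X, y = x :=
  stmt7_general T μ hfull hmix
end

section
/- Let A be a unital C*-algebra, α an automorphism, ω an α-invariant state, and suppose the system is asymptotically Abelian: lim_{n→∞} ω(c[αⁿ(a), b]d) = 0 for all a, b, c, d ∈ A, where [x,y] = xy − yx. If ω is mixing, i.e., lim_{n→∞} ω(a αⁿ(b)) = ω(a)ω(b) for all a, b ∈ A, then lim_{n→∞} ω(b αⁿ(a) c) = ω(bc)ω(a) for all a, b, c ∈ A. -/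
open Filter Topology

/-- A state on a unital C*-algebra: a continuous linear functional that is
unital and positive. -/
def IsState {A : Type*} [NormedRing A] [StarRing A] [NormedAlgebra ℂ A]
    (φ : A →L[ℂ] ℂ) : Prop :=
  φ 1 = 1 ∧ ∀ a : A, 0 ≤ (φ (star a * a)).re ∧ (φ (star a * a)).im = 0

theorem Filter.Tendsto.map_mul_mul_of_tendsto_map_commutator {R M F ι : Type*} [Ring R]
    [AddCommGroup M] [TopologicalSpace M] [ContinuousAdd M] [FunLike F R M]
    [AddMonoidHomClass F R M] (φ : F) {l : Filter ι} {x : ι → R} {b c : R} {m : M}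
    (hmix : Tendsto (fun n => φ (b * c * x n)) l (𝓝 m))
    (hcomm : Tendsto (fun n => φ (b * (x n * c - c * x n))) l (𝓝 0)) :
    Tendsto (fun n => φ (b * x n * c)) l (𝓝 m) := by
  have hsplit (y : R) : b * y * c = b * c * y + b * (y * c - c * y) := by noncomm_ring
  simpa only [hsplit, map_add, add_zero] using hmix.add hcomm

theorem stmt11_general {A : Type*} [NormedRing A] [StarRing A]
    [NormedAlgebra ℂ A]
    (α : A ≃⋆ₐ[ℂ] A) (ω : A →L[ℂ] ℂ)
    (habel : ∀ a b c d : A,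
      Tendsto (fun n : ℕ => ω (c * ((⇑α)^[n] a * b - b * (⇑α)^[n] a) * d))
        atTop (nhds 0))
    (hmix : ∀ a b : A,
      Tendsto (fun n : ℕ => ω (a * (⇑α)^[n] b)) atTop (nhds (ω a * ω b))) :
    ∀ a b c : A,
      Tendsto (fun n : ℕ => ω (b * (⇑α)^[n] a * c)) atTop (nhds (ω (b * c) * ω a)) := by
  intro a b c
  refine (hmix (b * c) a).map_mul_mul_of_tendsto_map_commutator ω ?_
  simpa only [mul_one] using habel a c b 1

/-- For an asymptotically Abelian system, mixing implies the three-point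
mixing property `ω(b αⁿ(a) c) → ω(bc)ω(a)`. -/
theorem stmt11 {A : Type*} [NormedRing A] [StarRing A] [CStarRing A]
    [NormedAlgebra ℂ A] [StarModule ℂ A] [CompleteSpace A]
    (α : A ≃⋆ₐ[ℂ] A) (ω : A →L[ℂ] ℂ) (hω : IsState ω)
    (hinv : ∀ a : A, ω (α a) = ω a)
    (habel : ∀ a b c d : A,
      Tendsto (fun n : ℕ => ω (c * ((⇑α)^[n] a * b - b * (⇑α)^[n] a) * d))
        atTop (nhds 0))
    (hmix : ∀ a b : A,
      Tendsto (fun n : ℕ => ω (a * (⇑α)^[n] b)) atTop (nhds (ω a * ω b))) :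
    ∀ a b c : A,
      Tendsto (fun n : ℕ => ω (b * (⇑α)^[n] a * c)) atTop (nhds (ω (b * c) * ω a)) :=
  stmt11_general α ω habel hmix
end

section
/- Let A be a unital C*-algebra, α an automorphism, ω an α-invariant state, with asymptotic Abelianess: (1/n) Σ_{k=0}^{n-1} |ω(b[αᵏ(a), c])| → 0 for all a, b, c ∈ A. If the system is weakly mixing, i.e., (1/n) Σ_{k=0}^{n-1} |ω(a αᵏ(b)) − ω(a)ω(b)| → 0 for all a, b, then (1/n) Σ_{k=0}^{n-1} |ω(b αᵏ(a) c) − ω(bc)ω(a)| → 0 for all a, b, c ∈ A. -/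
open Filter Finset

theorem tendsto_cesaro_zero_of_le_add {u v w : ℕ → ℝ} (hu : ∀ k, 0 ≤ u k)
    (huvw : ∀ k, u k ≤ v k + w k)
    (hv : Tendsto (fun n : ℕ => (1 / n : ℝ) * ∑ k ∈ range n, v k) atTop (nhds 0))
    (hw : Tendsto (fun n : ℕ => (1 / n : ℝ) * ∑ k ∈ range n, w k) atTop (nhds 0)) :
    Tendsto (fun n : ℕ => (1 / n : ℝ) * ∑ k ∈ range n, u k) atTop (nhds 0) := by
  refine squeeze_zero (fun n => ?_) (fun n => ?_) (by simpa only [add_zero] using hv.add hw)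
  · exact mul_nonneg (by positivity) (sum_nonneg fun k _ => hu k)
  · rw [← mul_add, ← sum_add_distrib]
    exact mul_le_mul_of_nonneg_left (sum_le_sum fun k _ => huvw k)
      (one_div_nonneg.mpr n.cast_nonneg)

theorem map_mul_mul_sub_eq_add_map_mul_commutator {A B F : Type*} [NonUnitalRing A] [AddCommGroup B]
    [FunLike F A B] [AddMonoidHomClass F A B] (φ : F) (b x c : A) (p : B) :
    φ (b * x * c) - p = (φ (b * c * x) - p) + φ (b * (x * c - c * x)) := by
  rw [mul_sub, map_sub, mul_assoc, mul_assoc]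
  abel

theorem stmt12_general {A : Type*} [NormedRing A] [StarRing A]
    [NormedAlgebra ℂ A]
    (α : A ≃⋆ₐ[ℂ] A) (ω : A →L[ℂ] ℂ)
    (habel : ∀ a b c : A,
      Tendsto (fun n : ℕ =>
          (1 / n : ℝ) * ∑ k ∈ range n, ‖ω (b * ((⇑α)^[k] a * c - c * (⇑α)^[k] a))‖)
        atTop (nhds 0))
    (hwm : ∀ a b : A,
      Tendsto (fun n : ℕ =>
          (1 / n : ℝ) * ∑ k ∈ range n, ‖ω (a * (⇑α)^[k] b) - ω a * ω b‖)
        atTop (nhds 0)) :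
    ∀ a b c : A,
      Tendsto (fun n : ℕ =>
          (1 / n : ℝ) * ∑ k ∈ range n, ‖ω (b * (⇑α)^[k] a * c) - ω (b * c) * ω a‖)
        atTop (nhds 0) := by
  intro a b c
  refine tendsto_cesaro_zero_of_le_add (fun k => norm_nonneg _) (fun k => ?_)
    (hwm (b * c) a) (habel a b c)
  rw [map_mul_mul_sub_eq_add_map_mul_commutator ω]
  exact norm_add_le _ _

/-- For a Cesàro asymptotically Abelian system, weak mixing implies the
three-point weak mixing property. -/
theorem stmt12 {A : Type*} [NormedRing A] [StarRing A] [CStarRing A]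
    [NormedAlgebra ℂ A] [StarModule ℂ A] [CompleteSpace A]
    (α : A ≃⋆ₐ[ℂ] A) (ω : A →L[ℂ] ℂ) (hω : IsState ω)
    (hinv : ∀ a : A, ω (α a) = ω a)
    (habel : ∀ a b c : A,
      Tendsto (fun n : ℕ =>
          (1 / n : ℝ) * ∑ k ∈ range n, ‖ω (b * ((⇑α)^[k] a * c - c * (⇑α)^[k] a))‖)
        atTop (nhds 0))
    (hwm : ∀ a b : A,
      Tendsto (fun n : ℕ =>
          (1 / n : ℝ) * ∑ k ∈ range n, ‖ω (a * (⇑α)^[k] b) - ω a * ω b‖)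
        atTop (nhds 0)) :
    ∀ a b c : A,
      Tendsto (fun n : ℕ =>
          (1 / n : ℝ) * ∑ k ∈ range n, ‖ω (b * (⇑α)^[k] a * c) - ω (b * c) * ω a‖)
        atTop (nhds 0) :=
  stmt12_general α ω habel hwm
end
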